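/- Let A, B be associative conformal algebras, and let L = ⊕_{i≥0} L^i with L^i spanned by conformal sesquilinear maps from tensor products of copies of A and B (with at least one B factor and total degree i+1) to A. Then L is closed under the Gerstenhaber bracket and closed under the differential d̄ = [m_A + m_B, −] on the Hochschild complex of A ⊕ B, hence (L, [−,−], d̄) is a differential graded Lie subalgebra; moreover its degree 0 part L⁰ = Hom_{k[∂]}(B,A) is an abelian Lie algebra. -/

import Mathlib

structure AssocConformalAlg (k : Type*) [Field k] (A : Type*) [AddCommGroup A] [Module k A] where
  D : A →ₗ[k] A
  mul : k → A →ₗ[k] A →ₗ[k] A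
  conf_left : ∀ (l : k) (a b : A), mul l (D a) b = -(l • mul l a b)
  conf_right : ∀ (l : k) (a b : A), mul l a (D b) = D (mul l a b) + l • mul l a b
  assoc : ∀ (l m : k) (a b c : A), mul (l + m) (mul l a b) c = mul l a (mul m b c)

abbrev RawCochain (k : Type*) (E : Type*) := (ℕ → k) → (ℕ → E) → E

def gComp {k : Type*} [Field k] {E : Type*} [AddCommGroup E] (q i : ℕ)
    (f g : RawCochain k E) : RawCochain k E :=
  fun Λ a =>
    f (fun j => if j < i then Λ j
        else if j = i then ∑ t ∈ Finset.range (q + 1), Λ (i + t)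
        else Λ (j + q))
      (fun j => if j < i then a j
        else if j = i then g (fun t => Λ (i + t)) (fun t => a (i + t))
        else a (j + q))

def gBullet {k : Type*} [Field k] {E : Type*} [AddCommGroup E] (p q : ℕ)
    (f g : RawCochain k E) : RawCochain k E :=
  ∑ i ∈ Finset.range (p + 1), ((-1 : ℤ) ^ (q * i)) • gComp q i f g

def gBra {k : Type*} [Field k] {E : Type*} [AddCommGroup E] (p q : ℕ)
    (f g : RawCochain k E) : RawCochain k E :=
  gBullet p q f g - ((-1 : ℤ) ^ (p * q)) • gBullet q p g f

def muE {k : Type*} [Field k] {A B : Type*}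
    [AddCommGroup A] [Module k A] [AddCommGroup B] [Module k B]
    (SA : AssocConformalAlg k A) (SB : AssocConformalAlg k B) : RawCochain k (A × B) :=
  fun Λ a => (SA.mul (Λ 0) (a 0).1 (a 1).1, SB.mul (Λ 0) (a 0).2 (a 1).2)

def trip2 {k : Type*} [Field k] {A B : Type*}
    [AddCommGroup A] [Module k A] [AddCommGroup B] [Module k B]
    (lact : k → B →ₗ[k] A →ₗ[k] A) (ract : k → A →ₗ[k] B →ₗ[k] A)
    (chi : k → B →ₗ[k] B →ₗ[k] A) : RawCochain k (A × B) :=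
  fun Λ a =>
    (lact (Λ 0) (a 0).2 (a 1).1 + ract (Λ 0) (a 0).1 (a 1).2 + chi (Λ 0) (a 0).2 (a 1).2, 0)

/-- Membership in the graded subspace `L`: `A`-valued cochains on `A ⊕ B` that vanish on
tuples of elements of `A` (i.e. cochains with at least one `B`-argument). -/
def InL {k : Type*} {A B : Type*} [AddCommGroup A] [AddCommGroup B]
    (φ : RawCochain k (A × B)) : Prop :=
  (∀ Λ a, (φ Λ a).2 = 0) ∧ (∀ Λ a, (∀ j, (a j).2 = 0) → φ Λ a = 0)

/-! The outer cochain of a partial composite `f ∘ᵢ g` determines its value, so the composite is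
`A`-valued when `f` is; and on an all-`A` tuple the inner `g` lands in `A` whenever `g ∈ L` or
`g = m_A + m_B`, so `f ∈ L` then kills the composite. Brackets are signed sums of such
composites, and `L` is an additive subgroup. In degree 0, `[F, G] = F ∘ G - G ∘ F`, and both
terms vanish since `F` and `G` take values in `A` and vanish on `A`. -/

section
variable {k : Type*} {A B : Type*} [AddCommGroup A] [AddCommGroup B]

def cochainsL : AddSubgroup (RawCochain k (A × B)) where
  carrier := {φ | InL φ}
  add_mem' hφ hψ :=
    ⟨fun Λ a => by simp [hφ.1 Λ a, hψ.1 Λ a],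
      fun Λ a ha => by simp [hφ.2 Λ a ha, hψ.2 Λ a ha]⟩
  zero_mem' := ⟨fun _ _ => rfl, fun _ _ _ => rfl⟩
  neg_mem' hφ :=
    ⟨fun Λ a => by simp [hφ.1 Λ a], fun Λ a ha => by simp [hφ.2 Λ a ha]⟩

end

section
variable {k : Type*} [Field k] {A B : Type*} [AddCommGroup A] [AddCommGroup B]

theorem gComp_mem_cochainsL {q i : ℕ} {f g : RawCochain k (A × B)} (hf : InL f)
    (hg : ∀ Λ a, (∀ j, (a j).2 = 0) → (g Λ a).2 = 0) : gComp q i f g ∈ cochainsL := by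
  refine ⟨fun Λ a => hf.1 _ _, fun Λ a ha => hf.2 _ _ fun j => ?_⟩
  split_ifs
  · exact ha j
  · exact hg _ _ fun t => ha (i + t)
  · exact ha (j + q)

theorem gBullet_mem_cochainsL {p q : ℕ} {f g : RawCochain k (A × B)}
    (h : ∀ i < p + 1, gComp q i f g ∈ cochainsL) : gBullet p q f g ∈ cochainsL :=
  AddSubgroup.sum_mem _ fun i hi => AddSubgroup.zsmul_mem _ (h i (Finset.mem_range.mp hi)) _

theorem gBra_mem_cochainsL {p q : ℕ} {f g : RawCochain k (A × B)}
    (hfg : ∀ i < p + 1, gComp q i f g ∈ cochainsL)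
    (hgf : ∀ i < q + 1, gComp p i g f ∈ cochainsL) : gBra p q f g ∈ cochainsL :=
  sub_mem (gBullet_mem_cochainsL hfg) (zsmul_mem (gBullet_mem_cochainsL hgf) _)

theorem gBra_mem_cochainsL_of_mem {p q : ℕ} {f g : RawCochain k (A × B)} (hf : InL f)
    (hg : InL g) : gBra p q f g ∈ cochainsL :=
  gBra_mem_cochainsL (fun _ _ => gComp_mem_cochainsL hf fun Λ a ha => by rw [hg.2 Λ a ha]; rfl)
    (fun _ _ => gComp_mem_cochainsL hg fun Λ a ha => by rw [hf.2 Λ a ha]; rfl)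

theorem gBra_zero_zero_unary (F G : A × B → A × B) :
    gBra (k := k) 0 0 (fun _ a => F (a 0)) (fun _ a => G (a 0)) =
      fun _ a => F (G (a 0)) - G (F (a 0)) := by
  funext Λ a
  simp [gBra, gBullet, gComp]

end

section
variable {k : Type*} [Field k] {A B : Type*} [AddCommGroup A] [Module k A]
  [AddCommGroup B] [Module k B] (SA : AssocConformalAlg k A) (SB : AssocConformalAlg k B)

theorem muE_snd_eq_zero_of_left {Λ : ℕ → k} {a : ℕ → A × B} (h : (a 0).2 = 0) :
    (muE SA SB Λ a).2 = 0 := by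
  simp [muE, h]

theorem muE_snd_eq_zero_of_right {Λ : ℕ → k} {a : ℕ → A × B} (h : (a 1).2 = 0) :
    (muE SA SB Λ a).2 = 0 := by
  simp [muE, h]

theorem muE_eq_zero_of_left {Λ : ℕ → k} {a : ℕ → A × B} (h : a 0 = 0) : muE SA SB Λ a = 0 := by
  simp [muE, h]

theorem muE_eq_zero_of_right {Λ : ℕ → k} {a : ℕ → A × B} (h : a 1 = 0) : muE SA SB Λ a = 0 := by
  simp [muE, h]

theorem gComp_muE_mem_cochainsL {p i : ℕ} (hi : i < 2) {f : RawCochain k (A × B)} (hf : InL f) :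
    gComp p i (muE SA SB) f ∈ cochainsL := by
  interval_cases i
  · refine ⟨fun Λ a => muE_snd_eq_zero_of_left SA SB (hf.1 _ _),
      fun Λ a ha => muE_eq_zero_of_left SA SB (hf.2 _ _ fun t => ha (0 + t))⟩
  · refine ⟨fun Λ a => muE_snd_eq_zero_of_right SA SB (hf.1 _ _),
      fun Λ a ha => muE_eq_zero_of_right SA SB (hf.2 _ _ fun t => ha (1 + t))⟩

theorem gBra_muE_mem_cochainsL {p : ℕ} {f : RawCochain k (A × B)} (hf : InL f) :
    gBra 1 p (muE SA SB) f ∈ cochainsL :=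
  gBra_mem_cochainsL (fun _ hi => gComp_muE_mem_cochainsL SA SB hi hf)
    fun _ _ => gComp_mem_cochainsL hf fun _ _ ha => muE_snd_eq_zero_of_left SA SB (ha 0)

end

theorem stmt_13_general (k : Type*) [Field k]
    (A B : Type*) [AddCommGroup A] [Module k A] [AddCommGroup B] [Module k B]
    (SA : AssocConformalAlg k A) (SB : AssocConformalAlg k B) :
    (∀ (p q : ℕ) (f g : RawCochain k (A × B)),
      InL f → InL g → InL (gBra p q f g)) ∧
    (∀ (p : ℕ) (f : RawCochain k (A × B)),
      InL f → InL (gBra 1 p (muE SA SB) f)) ∧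
    (∀ F G : A × B → A × B,
      ((∀ x, (F x).2 = 0) ∧ ∀ x : A × B, x.2 = 0 → F x = 0) →
      ((∀ x, (G x).2 = 0) ∧ ∀ x : A × B, x.2 = 0 → G x = 0) →
      gBra (k := k) 0 0 (fun (_ : ℕ → k) (a : ℕ → A × B) => F (a 0))
        (fun (_ : ℕ → k) (a : ℕ → A × B) => G (a 0)) = 0) := by
  refine ⟨fun p q f g hf hg => gBra_mem_cochainsL_of_mem hf hg,
    fun p f hf => gBra_muE_mem_cochainsL SA SB hf, fun F G hF hG => ?_⟩
  rw [gBra_zero_zero_unary]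
  funext Λ a
  simp [hF.2 _ (hG.1 _), hG.2 _ (hF.1 _)]

/-- `L` is closed under the Gerstenhaber bracket and under the differential
`d̄ = [m_A + m_B, -]`, hence a differential graded Lie subalgebra; its degree-0 part
`Hom_{k[∂]}(B,A)` is abelian. -/
theorem stmt_13 (k : Type*) [Field k] [IsAlgClosed k] [CharZero k]
    (A B : Type*) [AddCommGroup A] [Module k A] [AddCommGroup B] [Module k B]
    (SA : AssocConformalAlg k A) (SB : AssocConformalAlg k B) :
    (∀ (p q : ℕ) (f g : RawCochain k (A × B)),
      InL f → InL g → InL (gBra p q f g)) ∧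
    (∀ (p : ℕ) (f : RawCochain k (A × B)),
      InL f → InL (gBra 1 p (muE SA SB) f)) ∧
    (∀ F G : A × B → A × B,
      ((∀ x, (F x).2 = 0) ∧ ∀ x : A × B, x.2 = 0 → F x = 0) →
      ((∀ x, (G x).2 = 0) ∧ ∀ x : A × B, x.2 = 0 → G x = 0) →
      gBra (k := k) 0 0 (fun (_ : ℕ → k) (a : ℕ → A × B) => F (a 0))
        (fun (_ : ℕ → k) (a : ℕ → A × B) => G (a 0)) = 0) :=
  stmt_13_general k A B SA SB
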